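/- arXiv:2503.20524 — 4 statements merged into one kernel-verified Lean document; each statement's English description precedes it below -/
import Mathlib

section
/- Let φ: U × ℝ^d → [0,∞) be an admissible anisotropy with dual φ°. Then for every x ∈ U, every ν ∈ ℝ^d∖{0}, and every i = 1,…,d one has ∂_{x_i}φ(x, ∇_νφ°(x,ν)) + ∂_{x_i}φ°(x, ν/φ°(x,ν)) = 0, where ∂_{x_i} denotes the partial derivative in the first (spatial) argument, evaluated at the indicated points. -/
open MeasureTheory

/-- The dual anisotropy `φ°(x,ν*) = sup { ν*·ν : φ(x,ν) ≤ 1 }`. -/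
noncomputable def anisoDual {d : ℕ}
    (φ : EuclideanSpace ℝ (Fin d) → EuclideanSpace ℝ (Fin d) → ℝ)
    (x ν : EuclideanSpace ℝ (Fin d)) : ℝ :=
  sSup ((fun w => (inner ℝ ν w : ℝ)) '' {w | φ x w ≤ 1})

/-- An admissible anisotropy on an open set `U ⊆ ℝ^d`. -/
structure IsAdmissibleAnisotropy {d : ℕ} (U : Set (EuclideanSpace ℝ (Fin d)))
    (φ : EuclideanSpace ℝ (Fin d) → EuclideanSpace ℝ (Fin d) → ℝ) : Prop where
  nonneg : ∀ x ∈ U, ∀ ν, 0 ≤ φ x ν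
  smooth : ContDiffOn ℝ 2
      (fun p : EuclideanSpace ℝ (Fin d) × EuclideanSpace ℝ (Fin d) => φ p.1 p.2)
      (U ×ˢ ({(0 : EuclideanSpace ℝ (Fin d))}ᶜ))
  strictConvexSq : ∀ x ∈ U, StrictConvexOn ℝ Set.univ fun ν => φ x ν ^ 2
  homogeneous : ∀ x ∈ U, ∀ (ν : EuclideanSpace ℝ (Fin d)) (l : ℝ), φ x (l • ν) = |l| * φ x ν
  bounds : ∃ cφ Cφ : ℝ, 0 < cφ ∧ cφ ≤ Cφ ∧
      ∀ x ∈ U, ∀ ν, cφ * ‖ν‖ ≤ φ x ν ∧ φ x ν ≤ Cφ * ‖ν‖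

/-! Fix `x` and `ν`, and let `w = ∇_νφ°(x, ν)`. Testing the supremum defining `φ°(y, ν)` with
`w / φ(y, w)` gives `φ°(y, ν) ≥ ⟪ν, w⟫ / φ(y, w)` for every `y`, and at `y = x` this is an equality,
since `φ(x, w) = 1` and `⟪ν, w⟫ = φ°(x, ν)` by Euler's identity. Two functions of `y` touching at a
point, one above the other, are tangent there, so
`∂_y φ°(x, ν) = -φ°(x, ν) ∂_y φ(x, w)`; dividing by `φ°(x, ν)` and using the homogeneity of `φ°` in
its second argument gives the identity. -/

theorem HasFDerivAt.eq_of_eventuallyLE_of_eq {E : Type*} [NormedAddCommGroup E] [NormedSpace ℝ E]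
    {f g : E → ℝ} {f' g' : E →L[ℝ] ℝ} {x : E} (hf : HasFDerivAt f f' x) (hg : HasFDerivAt g g' x)
    (hle : g ≤ᶠ[nhds x] f) (heq : g x = f x) : f' = g' := by
  have hmin : IsLocalMin (f - g) x := by
    filter_upwards [hle] with y hy
    simp only [Pi.sub_apply, heq, sub_self, sub_nonneg, hy]
  exact sub_eq_zero.mp (hmin.hasFDerivAt_eq_zero (hf.sub hg))

namespace IsAdmissibleAnisotropy

variable {d : ℕ} {U : Set (EuclideanSpace ℝ (Fin d))}
  {φ : EuclideanSpace ℝ (Fin d) → EuclideanSpace ℝ (Fin d) → ℝ} {x : EuclideanSpace ℝ (Fin d)}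

theorem apply_zero (hφ : IsAdmissibleAnisotropy U φ) (hx : x ∈ U) : φ x 0 = 0 := by
  simpa using hφ.homogeneous x hx 0 0

theorem pos (hφ : IsAdmissibleAnisotropy U φ) (hx : x ∈ U) {ν : EuclideanSpace ℝ (Fin d)}
    (hν : ν ≠ 0) : 0 < φ x ν := by
  obtain ⟨c, _, hc, _, hb⟩ := hφ.bounds
  exact (mul_pos hc (norm_pos_iff.mpr hν)).trans_le (hb x hx ν).1

theorem differentiableAt_fst (hφ : IsAdmissibleAnisotropy U φ) (hU : IsOpen U) (hx : x ∈ U)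
    {ν : EuclideanSpace ℝ (Fin d)} (hν : ν ≠ 0) : DifferentiableAt ℝ (fun y => φ y ν) x := by
  have hmem : U ×ˢ {0}ᶜ ∈ nhds (x, ν) := (hU.prod isOpen_compl_singleton).mem_nhds ⟨hx, hν⟩
  have hjoint := (hφ.smooth.contDiffAt hmem).differentiableAt (by norm_num)
  exact hjoint.comp x (differentiableAt_fun_id.prodMk (𝕜 := ℝ) (differentiableAt_const ν))

theorem fderiv_fst_smul (hφ : IsAdmissibleAnisotropy U φ) (hU : IsOpen U) (hx : x ∈ U)
    (ν : EuclideanSpace ℝ (Fin d)) {t : ℝ} (ht : 0 ≤ t) :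
    fderiv ℝ (fun y => φ y (t • ν)) x = t • fderiv ℝ (fun y => φ y ν) x := by
  have heq : (fun y => φ y (t • ν)) =ᶠ[nhds x] t • fun y => φ y ν := by
    filter_upwards [hU.mem_nhds hx] with y hy
    simp only [hφ.homogeneous y hy ν t, abs_of_nonneg ht, Pi.smul_apply, smul_eq_mul]
  rw [heq.fderiv_eq, fderiv_const_smul_field, Pi.smul_apply]

theorem bddAbove_inner_image (hφ : IsAdmissibleAnisotropy U φ) (hx : x ∈ U)
    (ν : EuclideanSpace ℝ (Fin d)) :
    BddAbove ((fun w => (inner ℝ ν w : ℝ)) '' {w | φ x w ≤ 1}) := by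
  obtain ⟨c, _, hc, _, hb⟩ := hφ.bounds
  refine ⟨‖ν‖ * (1 / c), ?_⟩
  rintro _ ⟨w, hw, rfl⟩
  have hw' : ‖w‖ ≤ 1 / c := (le_div_iff₀' hc).mpr ((hb x hx w).1.trans hw)
  calc (inner ℝ ν w : ℝ) ≤ ‖ν‖ * ‖w‖ := real_inner_le_norm ν w
    _ ≤ ‖ν‖ * (1 / c) := by gcongr

theorem inner_div_le_anisoDual (hφ : IsAdmissibleAnisotropy U φ) (hx : x ∈ U)
    (ν : EuclideanSpace ℝ (Fin d)) {w : EuclideanSpace ℝ (Fin d)} (hw : w ≠ 0) :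
    (inner ℝ ν w : ℝ) / φ x w ≤ anisoDual φ x ν := by
  have hpos := hφ.pos hx hw
  refine le_csSup (hφ.bddAbove_inner_image hx ν) ⟨(φ x w)⁻¹ • w, ?_, ?_⟩
  · show φ x ((φ x w)⁻¹ • w) ≤ 1
    rw [hφ.homogeneous x hx, abs_of_pos (inv_pos.mpr hpos), inv_mul_cancel₀ hpos.ne']
  · simp only [real_inner_smul_right, div_eq_inv_mul]

theorem fderiv_anisoDual_fst (hφ : IsAdmissibleAnisotropy U φ) (hU : IsOpen U) (hx : x ∈ U)
    {ν w : EuclideanSpace ℝ (Fin d)} (hw : φ x w = 1) (hνw : (inner ℝ ν w : ℝ) = anisoDual φ x ν)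
    (hdiff : DifferentiableAt ℝ (fun y => anisoDual φ y ν) x) :
    fderiv ℝ (fun y => anisoDual φ y ν) x = -anisoDual φ x ν • fderiv ℝ (fun y => φ y w) x := by
  have hw0 : w ≠ 0 := by
    rintro rfl
    simp [hφ.apply_zero hx] at hw
  have hg := (hφ.differentiableAt_fst hU hx hw0).hasFDerivAt
  have hlower : HasFDerivAt (fun y => (inner ℝ ν w : ℝ) / φ y w)
      (-anisoDual φ x ν • fderiv ℝ (fun y => φ y w) x) x := by
    have hinv : HasFDerivAt (fun y => (φ y w)⁻¹) (-(φ x w ^ 2)⁻¹ • fderiv ℝ (fun y => φ y w) x) x :=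
      (hasDerivAt_inv (by simp [hw])).comp_hasFDerivAt x hg
    simp only [div_eq_mul_inv]
    exact (hinv.const_mul _).congr_fderiv (by simp [hw, hνw])
  refine hdiff.hasFDerivAt.eq_of_eventuallyLE_of_eq hlower ?_ (by simp [hw, hνw])
  filter_upwards [hU.mem_nhds hx] with y hy
  exact hφ.inner_div_le_anisoDual hy ν hw0

end IsAdmissibleAnisotropy

theorem spatial_derivative_identity_two_general {d : ℕ} (U : Set (EuclideanSpace ℝ (Fin d))) (hU : IsOpen U)
    (φ φd : EuclideanSpace ℝ (Fin d) → EuclideanSpace ℝ (Fin d) → ℝ)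
    (hφ : IsAdmissibleAnisotropy U φ)
    (hdual : ∀ x ν, φd x ν = anisoDual φ x ν)
    (hφd : IsAdmissibleAnisotropy U φd)
    -- classical duality identities (granted by the context)
    (hEuler : ∀ x ∈ U, ∀ ν : EuclideanSpace ℝ (Fin d), ν ≠ 0 →
      φ x ν = (inner ℝ (gradient (φ x) ν) ν : ℝ)
      ∧ φd x ν = (inner ℝ (gradient (φd x) ν) ν : ℝ))
    (hOne : ∀ x ∈ U, ∀ ν : EuclideanSpace ℝ (Fin d), ν ≠ 0 →
      φ x (gradient (φd x) ν) = 1 ∧ φd x (gradient (φ x) ν) = 1)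
    (x : EuclideanSpace ℝ (Fin d)) (hx : x ∈ U)
    (ν : EuclideanSpace ℝ (Fin d)) (hν : ν ≠ 0) (i : Fin d) :
    fderiv ℝ (fun y => φ y (gradient (φd x) ν)) x (EuclideanSpace.single i 1)
      + fderiv ℝ (fun y => φd y ((φd x ν)⁻¹ • ν)) x (EuclideanSpace.single i 1) = 0 := by
  obtain rfl : φd = anisoDual φ := funext₂ hdual
  have hc : 0 < anisoDual φ x ν := hφd.pos hx hν
  have hνw : (inner ℝ ν (gradient (anisoDual φ x) ν) : ℝ) = anisoDual φ x ν :=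
    (real_inner_comm _ _).trans (hEuler x hx ν hν).2.symm
  have htangent := hφ.fderiv_anisoDual_fst hU hx (hOne x hx ν hν).1 hνw
    (hφd.differentiableAt_fst hU hx hν)
  rw [hφd.fderiv_fst_smul hU hx ν (inv_nonneg.mpr hc.le), htangent, smul_smul]
  simp [hc.ne']

/-- spatial-derivative identity \eqref{property anisotropy phi 4}. -/
theorem spatial_derivative_identity_two {d : ℕ} (U : Set (EuclideanSpace ℝ (Fin d))) (hU : IsOpen U)
    (φ φd : EuclideanSpace ℝ (Fin d) → EuclideanSpace ℝ (Fin d) → ℝ)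
    (hφ : IsAdmissibleAnisotropy U φ)
    (hdual : ∀ x ν, φd x ν = anisoDual φ x ν)
    (hφd : IsAdmissibleAnisotropy U φd)
    -- classical duality identities (granted by the context)
    (hEuler : ∀ x ∈ U, ∀ ν : EuclideanSpace ℝ (Fin d), ν ≠ 0 →
      φ x ν = (inner ℝ (gradient (φ x) ν) ν : ℝ)
      ∧ φd x ν = (inner ℝ (gradient (φd x) ν) ν : ℝ))
    (hOne : ∀ x ∈ U, ∀ ν : EuclideanSpace ℝ (Fin d), ν ≠ 0 →
      φ x (gradient (φd x) ν) = 1 ∧ φd x (gradient (φ x) ν) = 1)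
    (hInv : ∀ x ∈ U, ∀ ν : EuclideanSpace ℝ (Fin d), ν ≠ 0 →
      φd x ν • gradient (φ x) (gradient (φd x) ν) = ν
      ∧ φ x ν • gradient (φd x) (gradient (φ x) ν) = ν)
    (x : EuclideanSpace ℝ (Fin d)) (hx : x ∈ U)
    (ν : EuclideanSpace ℝ (Fin d)) (hν : ν ≠ 0) (i : Fin d) :
    fderiv ℝ (fun y => φ y (gradient (φd x) ν)) x (EuclideanSpace.single i 1)
      + fderiv ℝ (fun y => φd y ((φd x ν)⁻¹ • ν)) x (EuclideanSpace.single i 1) = 0 :=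
  spatial_derivative_identity_two_general U hU φ φd hφ hdual hφd hEuler hOne x hx ν hν i
end

section
/- Let (γ_{ij})_{i,j=1}^3 be a symmetric 3×3 matrix of nonnegative real numbers with γ_{ii} = 0 for all i, satisfying the triangle inequalities γ_{ij} ≤ γ_{ik} + γ_{kj} for all i, j, k ∈ {1,2,3}. Then for all vectors p, q, r ∈ ℝ³ with nonnegative entries satisfying p_1+p_2+p_3 = q_1+q_2+q_3 = r_1+r_2+r_3 = 1, it holds that Σ_{i,j=1}^3 γ_{ij} ( p_i r_j − p_i q_j − q_i r_j ) ≤ 0. -/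
/-!
Since `p`, `q`, `r` are probability vectors, each of the three bilinear terms can be padded
with the missing third factor: the sum equals the expectation of
`γ a c - γ a b - γ b c` over independent indices `a ∼ p`, `b ∼ q`, `c ∼ r`, and every such
value is nonpositive by the triangle inequality through `b`.
-/

open Finset

theorem sum_sum_sum_mul_triangle_defect {ι : Type*} [Fintype ι] (γ : ι → ι → ℝ)
    (p q r : ι → ℝ) (hps : ∑ i, p i = 1) (hqs : ∑ i, q i = 1) (hrs : ∑ i, r i = 1) :
    ∑ a, ∑ b, ∑ c, p a * q b * r c * (γ a c - γ a b - γ b c) =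
      ∑ i, ∑ j, γ i j * (p i * r j - p i * q j - q i * r j) := by
  have hac : ∑ a, ∑ b, ∑ c, p a * q b * r c * γ a c = ∑ i, ∑ j, γ i j * (p i * r j) := by
    refine sum_congr rfl fun a _ => ?_
    rw [sum_comm]
    refine sum_congr rfl fun c _ => ?_
    rw [← sum_mul, ← sum_mul, ← mul_sum, hqs]
    ring
  have hab : ∑ a, ∑ b, ∑ c, p a * q b * r c * γ a b = ∑ i, ∑ j, γ i j * (p i * q j) := by
    refine sum_congr rfl fun a _ => sum_congr rfl fun b _ => ?_
    rw [← sum_mul, ← mul_sum, hrs]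
    ring
  have hbc : ∑ a, ∑ b, ∑ c, p a * q b * r c * γ b c = ∑ i, ∑ j, γ i j * (q i * r j) := by
    rw [sum_comm]
    refine sum_congr rfl fun b _ => ?_
    rw [sum_comm]
    refine sum_congr rfl fun c _ => ?_
    rw [← sum_mul, ← sum_mul, ← sum_mul, hps]
    ring
  simp only [mul_sub, sum_sub_distrib, hac, hab, hbc]

theorem sum_sum_mul_sub_nonpos_of_triangle {ι : Type*} [Fintype ι] (γ : ι → ι → ℝ)
    (htri : ∀ i j k, γ i j ≤ γ i k + γ k j) (p q r : ι → ℝ)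
    (hp : ∀ i, 0 ≤ p i) (hq : ∀ i, 0 ≤ q i) (hr : ∀ i, 0 ≤ r i)
    (hps : ∑ i, p i = 1) (hqs : ∑ i, q i = 1) (hrs : ∑ i, r i = 1) :
    ∑ i, ∑ j, γ i j * (p i * r j - p i * q j - q i * r j) ≤ 0 := by
  rw [← sum_sum_sum_mul_triangle_defect γ p q r hps hqs hrs]
  refine sum_nonpos fun a _ => sum_nonpos fun b _ => sum_nonpos fun c _ => ?_
  have hdefect : γ a c - γ a b - γ b c ≤ 0 := by linarith [htri a c b]
  exact mul_nonpos_of_nonneg_of_nonpos (mul_nonneg (mul_nonneg (hp a) (hq b)) (hr c)) hdefect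

theorem multiphase_triangle_inequality_general (γ : Fin 3 → Fin 3 → ℝ)
    (htri : ∀ i j k, γ i j ≤ γ i k + γ k j)
    (p q r : Fin 3 → ℝ)
    (hp : ∀ i, 0 ≤ p i) (hq : ∀ i, 0 ≤ q i) (hr : ∀ i, 0 ≤ r i)
    (hps : ∑ i, p i = 1) (hqs : ∑ i, q i = 1) (hrs : ∑ i, r i = 1) :
    ∑ i, ∑ j, γ i j * (p i * r j - p i * q j - q i * r j) ≤ 0 :=
  sum_sum_mul_sub_nonpos_of_triangle γ htri p q r hp hq hr hps hqs hrs

/-- the core algebraic inequality behind the approximate monotonicity of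
multiphase thresholding energies. -/
theorem multiphase_triangle_inequality (γ : Fin 3 → Fin 3 → ℝ)
    (hsymm : ∀ i j, γ i j = γ j i)
    (hnonneg : ∀ i j, 0 ≤ γ i j)
    (hdiag : ∀ i, γ i i = 0)
    (htri : ∀ i j k, γ i j ≤ γ i k + γ k j)
    (p q r : Fin 3 → ℝ)
    (hp : ∀ i, 0 ≤ p i) (hq : ∀ i, 0 ≤ q i) (hr : ∀ i, 0 ≤ r i)
    (hps : ∑ i, p i = 1) (hqs : ∑ i, q i = 1) (hrs : ∑ i, r i = 1) :
    ∑ i, ∑ j, γ i j * (p i * r j - p i * q j - q i * r j) ≤ 0 :=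
  multiphase_triangle_inequality_general γ htri p q r hp hq hr hps hqs hrs
end

section
/- Let A = ∪_{i=1}^n (a_i, b_i) and B = ∪_{j=1}^m (c_j, d_j) be finite unions of bounded open intervals whose closures are pairwise disjoint within each union (b_i < a_{i+1} and d_j < c_{j+1}), and assume A ∩ B = ∅. Let J_A := {a_1, b_1, …, a_n, b_n} and J_B := {c_1, d_1, …, c_m, d_m} be the sets of jump points of the indicator functions w := 1_A and w̃ := 1_B. Then for every bounded continuous function γ̂: ℝ → ℝ, lim_{h→0⁺} (1/√h) ∫_ℝ γ̂(t) w̃(t) ( w(t + √h) + w(t − √h) ) dt = Σ_{t ∈ J_A ∩ J_B} γ̂(t). -/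
/-!
Expanding `1_A = ∑ᵢ 1_(aᵢ, bᵢ)` and `1_B = ∑ⱼ 1_(cⱼ, dⱼ)`, the integral splits into the integrals
of `γ̂` over the overlaps `(cⱼ, dⱼ) ∩ (aᵢ ∓ ε, bᵢ ∓ ε)`. As the two intervals are disjoint, such an
overlap is eventually empty unless they touch, in which case it is an interval of length `ε` at
the common endpoint, and the rescaled integral tends to the value of `γ̂` there (fundamental theorem
of calculus). The common jump points are exactly these touchings `aᵢ = dⱼ` and `bᵢ = cⱼ`, each
counted once because the endpoints within each union are distinct.
-/

open MeasureTheory Filter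

open Set Function Topology

section SeparatedIntervals

variable {ι α : Type*} [LinearOrder ι] [LinearOrder α] {a b : ι → α}

theorem pairwise_disjoint_Ioo_of_separated (hsep : ∀ i j, i < j → b i ≤ a j) :
    Pairwise (Disjoint on fun i => Ioo (a i) (b i)) :=
  (pairwise_disjoint_on _).2 fun i j hij =>
    disjoint_left.2 fun x hx hx' => lt_irrefl x (hx.2.trans ((hsep i j hij).trans_lt hx'.1))

theorem injective_sumElim_of_separated (hab : ∀ i, a i < b i)
    (hsep : ∀ i j, i < j → b i < a j) : Injective (Sum.elim a b) := by
  have ha : StrictMono a := fun i j hij => (hab i).trans (hsep i j hij)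
  have hb : StrictMono b := fun i j hij => (hsep i j hij).trans (hab j)
  refine ha.injective.sumElim hb.injective fun i j hij => ?_
  rcases le_or_gt i j with h | h
  · exact ((hab i).trans_le (hb.monotone h)).ne hij
  · exact (hsep j i h).ne' hij

end SeparatedIntervals

theorem le_or_le_of_disjoint_Ioo {α : Type*} [LinearOrder α] [DenselyOrdered α] {a b c d : α}
    (hab : a < b) (hcd : c < d) (h : Disjoint (Ioo a b) (Ioo c d)) : b ≤ c ∨ d ≤ a := by
  rw [Ioo_disjoint_Ioo, min_le_iff, le_max_iff, le_max_iff] at h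
  rcases h with (h | h) | (h | h)
  · exact absurd h hab.not_ge
  · exact .inl h
  · exact .inr h
  · exact absurd h hcd.not_ge

theorem Finset.image_sumElim_univ {α β γ : Type*} [Fintype α] [Fintype β] [DecidableEq γ]
    (f : α → γ) (g : β → γ) :
    Finset.image (Sum.elim f g) Finset.univ =
      Finset.image f Finset.univ ∪ Finset.image g Finset.univ := by
  ext; simp

theorem Finset.sum_inter_image_eq_sum_sum_ite {ι κ α M : Type*} [Fintype ι] [Fintype κ]
    [DecidableEq α] [AddCommMonoid M] {f : ι → α} {g : κ → α} (hf : Injective f)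
    (hg : Injective g) (φ : α → M) :
    ∑ t ∈ Finset.image f Finset.univ ∩ Finset.image g Finset.univ, φ t =
      ∑ i, ∑ j, if f i = g j then φ (f i) else 0 := by
  rw [← Finset.sum_ite_mem, Finset.sum_image hf.injOn]
  refine Finset.sum_congr rfl fun i _ => ?_
  rw [← Finset.sum_ite_eq (Finset.image g Finset.univ) (f i) fun _ => φ (f i),
    Finset.sum_image hg.injOn]

theorem Set.indicator_iUnion_eq_sum {ι α M : Type*} [Fintype ι] [AddCommMonoid M]
    {s : ι → Set α} (hs : Pairwise (Disjoint on s)) (f : α → M) :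
    (⋃ i, s i).indicator f = fun x => ∑ i, (s i).indicator f x := by
  simpa using Finset.indicator_biUnion Finset.univ s (hs.set_pairwise _)

theorem Real.tendsto_sqrt_nhdsGT_zero : Tendsto Real.sqrt (𝓝[>] 0) (𝓝[>] 0) := by
  have h := Real.continuous_sqrt.continuousWithinAt.tendsto_nhdsWithin (x := 0) (s := Ioi 0)
    (t := Ioi 0) fun _ hx => Real.sqrt_pos.2 hx
  rwa [Real.sqrt_zero] at h

theorem Continuous.tendsto_inv_mul_setIntegral_Ioo_right {γ : ℝ → ℝ} (hγ : Continuous γ) (x : ℝ) :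
    Tendsto (fun ε => ε⁻¹ * ∫ t in Ioo x (x + ε), γ t) (𝓝[>] 0) (𝓝 (γ x)) := by
  refine (hγ.integral_hasStrictDerivAt x x).hasDerivAt.tendsto_slope_zero_right.congr' ?_
  filter_upwards [self_mem_nhdsWithin] with ε (hε : 0 < ε)
  rw [intervalIntegral.integral_same, sub_zero, smul_eq_mul,
    intervalIntegral.integral_of_le (by linarith), integral_Ioc_eq_integral_Ioo]

theorem mul_indicator_one_mul_indicator_one_sub {α M : Type*} [Sub α] [MulZeroOneClass M]
    (γ : α → M) (s u : Set α) (x t : α) :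
    γ t * s.indicator 1 t * u.indicator 1 (t - x) = (s ∩ (· - x) ⁻¹' u).indicator γ t := by
  by_cases hs : t ∈ s <;> by_cases hu : t - x ∈ u <;> simp [hs, hu]

theorem integrable_mul_indicator_one_mul_indicator_one_sub {γ : ℝ → ℝ} {s u : Set ℝ}
    (hs : MeasurableSet s) (hu : MeasurableSet u) (hγ : IntegrableOn γ s) (x : ℝ) :
    Integrable fun t => γ t * s.indicator 1 t * u.indicator 1 (t - x) := by
  simp_rw [mul_indicator_one_mul_indicator_one_sub]
  exact (hγ.mono_set inter_subset_left).integrable_indicator (hs.inter (measurable_sub_const x hu))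

theorem integral_mul_indicator_iUnion_mul_indicator_iUnion_sub {ι κ : Type*} [Fintype ι]
    [Fintype κ] {γ : ℝ → ℝ} {s : κ → Set ℝ} {u : ι → Set ℝ} (hs : Pairwise (Disjoint on s))
    (hu : Pairwise (Disjoint on u)) (hsm : ∀ j, MeasurableSet (s j))
    (hum : ∀ i, MeasurableSet (u i)) (hγ : ∀ j, IntegrableOn γ (s j)) (x : ℝ) :
    ∫ t, γ t * (⋃ j, s j).indicator 1 t * (⋃ i, u i).indicator 1 (t - x) =
      ∑ i, ∑ j, ∫ t, γ t * (s j).indicator 1 t * (u i).indicator 1 (t - x) := by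
  have hint : ∀ i j, Integrable fun t => γ t * (s j).indicator 1 t * (u i).indicator 1 (t - x) :=
    fun i j => integrable_mul_indicator_one_mul_indicator_one_sub (hsm j) (hum i) (hγ j) x
  simp_rw [Set.indicator_iUnion_eq_sum hs, Set.indicator_iUnion_eq_sum hu, Finset.mul_sum,
    Finset.sum_mul]
  rw [integral_finsetSum _ fun i _ => integrable_finsetSum _ fun j _ => hint i j]
  exact Finset.sum_congr rfl fun i _ => integral_finsetSum _ fun j _ => hint i j

theorem integral_mul_indicator_iUnion_mul_indicator_iUnion_add_add_sub {ι κ : Type*} [Fintype ι]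
    [Fintype κ] {γ : ℝ → ℝ} {s : κ → Set ℝ} {u : ι → Set ℝ} (hs : Pairwise (Disjoint on s))
    (hu : Pairwise (Disjoint on u)) (hsm : ∀ j, MeasurableSet (s j))
    (hum : ∀ i, MeasurableSet (u i)) (hγ : ∀ j, IntegrableOn γ (s j)) (x : ℝ) :
    ∫ t, γ t * (⋃ j, s j).indicator 1 t *
        ((⋃ i, u i).indicator 1 (t + x) + (⋃ i, u i).indicator 1 (t - x)) =
      ∑ i, ∑ j, ((∫ t, γ t * (s j).indicator 1 t * (u i).indicator 1 (t + x)) +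
        ∫ t, γ t * (s j).indicator 1 t * (u i).indicator 1 (t - x)) := by
  have hint : ∀ y, Integrable fun t =>
      γ t * (⋃ j, s j).indicator 1 t * (⋃ i, u i).indicator 1 (t - y) :=
    integrable_mul_indicator_one_mul_indicator_one_sub (.iUnion hsm) (.iUnion hum)
      (integrableOn_finite_iUnion.2 hγ)
  have hsub := integral_mul_indicator_iUnion_mul_indicator_iUnion_sub hs hu hsm hum hγ
  simp_rw [mul_add]
  rw [integral_add (by simpa using hint (-x)) (hint x)]
  simpa [Finset.sum_add_distrib] using congr_arg₂ (· + ·) (hsub (-x)) (hsub x)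

theorem integral_mul_indicator_Ioo_mul_indicator_Ioo_sub (γ : ℝ → ℝ) (a b c d x : ℝ) :
    ∫ t, γ t * (Ioo c d).indicator 1 t * (Ioo a b).indicator 1 (t - x) =
      ∫ t in Ioo (max c (a + x)) (min d (b + x)), γ t := by
  simp_rw [mul_indicator_one_mul_indicator_one_sub, preimage_sub_const_Ioo, Ioo_inter_Ioo]
  exact integral_indicator measurableSet_Ioo

theorem integral_mul_indicator_Ioo_mul_indicator_Ioo_add (γ : ℝ → ℝ) (a b c d x : ℝ) :
    ∫ t, γ t * (Ioo c d).indicator 1 t * (Ioo a b).indicator 1 (t + x) =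
      ∫ t, γ (-t) * (Ioo (-d) (-c)).indicator 1 t * (Ioo (-b) (-a)).indicator 1 (t - x) := by
  conv_rhs => rw [← integral_neg_eq_self]
  congr 1 with t
  simp [indicator_apply, and_comm, sub_eq_add_neg, add_comm]

theorem tendsto_inv_mul_integral_mul_indicator_Ioo_mul_indicator_Ioo_sub {γ : ℝ → ℝ}
    (hγ : Continuous γ) {a b c d : ℝ} (hab : a < b) (hcd : c < d) (hsep : b ≤ c ∨ d ≤ a) :
    Tendsto (fun ε => ε⁻¹ * ∫ t, γ t * (Ioo c d).indicator 1 t * (Ioo a b).indicator 1 (t - ε))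
      (𝓝[>] 0) (𝓝 (if b = c then γ b else 0)) := by
  simp_rw [integral_mul_indicator_Ioo_mul_indicator_Ioo_sub]
  split_ifs with hbc
  · subst hbc
    refine (hγ.tendsto_inv_mul_setIntegral_Ioo_right b).congr' ?_
    filter_upwards [Ioo_mem_nhdsGT (lt_min (sub_pos.2 hab) (sub_pos.2 hcd))] with ε ⟨hε, hε'⟩
    rw [max_eq_left (by linarith [min_le_left (b - a) (d - b)]),
      min_eq_right (by linarith [min_le_right (b - a) (d - b)])]
  · have hempty : ∀ᶠ ε in 𝓝[>] 0, min d (b + ε) ≤ max c (a + ε) := by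
      rcases hsep with h | h
      · filter_upwards [Ioo_mem_nhdsGT (sub_pos.2 (lt_of_le_of_ne h hbc))] with ε ⟨_, hε⟩
        exact (min_le_right _ _).trans ((by linarith : b + ε ≤ c).trans (le_max_left _ _))
      · filter_upwards [self_mem_nhdsWithin] with ε (hε : 0 < ε)
        exact (min_le_left _ _).trans ((by linarith : d ≤ a + ε).trans (le_max_right _ _))
    refine tendsto_const_nhds.congr' ?_
    filter_upwards [hempty] with ε hε
    rw [Ioo_eq_empty hε.not_gt, setIntegral_empty, mul_zero]

theorem tendsto_inv_mul_integral_mul_indicator_Ioo_mul_indicator_Ioo_add {γ : ℝ → ℝ}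
    (hγ : Continuous γ) {a b c d : ℝ} (hab : a < b) (hcd : c < d) (hsep : b ≤ c ∨ d ≤ a) :
    Tendsto (fun ε => ε⁻¹ * ∫ t, γ t * (Ioo c d).indicator 1 t * (Ioo a b).indicator 1 (t + ε))
      (𝓝[>] 0) (𝓝 (if a = d then γ a else 0)) := by
  simp_rw [integral_mul_indicator_Ioo_mul_indicator_Ioo_add]
  simpa using tendsto_inv_mul_integral_mul_indicator_Ioo_mul_indicator_Ioo_sub
    (hγ.comp continuous_neg) (neg_lt_neg hab) (neg_lt_neg hcd) (hsep.symm.imp neg_le_neg neg_le_neg)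

section UnionsOfIntervals

variable {ι κ : Type*} [Fintype ι] [LinearOrder ι] [Fintype κ] [LinearOrder κ]
  {a b : ι → ℝ} {c d : κ → ℝ}

theorem tendsto_inv_mul_integral_mul_indicator_iUnion_Ioo {γ : ℝ → ℝ} (hγ : Continuous γ)
    (hab : ∀ i, a i < b i) (hcd : ∀ j, c j < d j) (hsepA : ∀ i j, i < j → b i ≤ a j)
    (hsepB : ∀ i j, i < j → d i ≤ c j) (hsep : ∀ i j, b i ≤ c j ∨ d j ≤ a i) :
    Tendsto (fun ε => ε⁻¹ * ∫ t, γ t * (⋃ j, Ioo (c j) (d j)).indicator 1 t *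
      ((⋃ i, Ioo (a i) (b i)).indicator 1 (t + ε) + (⋃ i, Ioo (a i) (b i)).indicator 1 (t - ε)))
      (𝓝[>] 0) (𝓝 (∑ i, ∑ j,
        ((if a i = d j then γ (a i) else 0) + if b i = c j then γ (b i) else 0))) := by
  refine (tendsto_finsetSum _ fun i _ => tendsto_finsetSum _ fun j _ =>
    (tendsto_inv_mul_integral_mul_indicator_Ioo_mul_indicator_Ioo_add hγ (hab i) (hcd j)
      (hsep i j)).add
    (tendsto_inv_mul_integral_mul_indicator_Ioo_mul_indicator_Ioo_sub hγ (hab i) (hcd j)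
      (hsep i j))).congr fun ε => ?_
  rw [integral_mul_indicator_iUnion_mul_indicator_iUnion_add_add_sub
    (pairwise_disjoint_Ioo_of_separated hsepB) (pairwise_disjoint_Ioo_of_separated hsepA)
    (fun _ => measurableSet_Ioo) (fun _ => measurableSet_Ioo)
    (fun _ => hγ.integrableOn_Icc.mono_set Ioo_subset_Icc_self)]
  simp_rw [Finset.mul_sum, mul_add]

theorem sum_inter_endpoints_eq_sum_sum_ite {M : Type*} [AddCommMonoid M] (φ : ℝ → M)
    (hab : ∀ i, a i < b i) (hcd : ∀ j, c j < d j) (hsepA : ∀ i j, i < j → b i < a j)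
    (hsepB : ∀ i j, i < j → d i < c j) (hsep : ∀ i j, b i ≤ c j ∨ d j ≤ a i) :
    ∑ t ∈ (Finset.image a Finset.univ ∪ Finset.image b Finset.univ) ∩
        (Finset.image c Finset.univ ∪ Finset.image d Finset.univ), φ t =
      ∑ i, ∑ j, ((if a i = d j then φ (a i) else 0) + if b i = c j then φ (b i) else 0) := by
  have hac : ∀ i j, a i ≠ c j := fun i j h => by
    rcases hsep i j with h' | h' <;> linarith [hab i, hcd j]
  have hbd : ∀ i j, b i ≠ d j := fun i j h => by
    rcases hsep i j with h' | h' <;> linarith [hab i, hcd j]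
  rw [← Finset.image_sumElim_univ, ← Finset.image_sumElim_univ,
    Finset.sum_inter_image_eq_sum_sum_ite (injective_sumElim_of_separated hab hsepA)
      (injective_sumElim_of_separated hcd hsepB)]
  simp only [Fintype.sum_sum_type, Sum.elim_inl, Sum.elim_inr, hac, hbd, if_false,
    Finset.sum_const_zero, zero_add, add_zero, Finset.sum_add_distrib]
  exact add_comm _ _

end UnionsOfIntervals

theorem one_dimensional_localization_general (n m : ℕ)
    (a b : Fin n → ℝ) (c d : Fin m → ℝ)
    (hab : ∀ i, a i < b i) (hcd : ∀ j, c j < d j)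
    (hsepA : ∀ i j : Fin n, i < j → b i < a j)
    (hsepB : ∀ i j : Fin m, i < j → d i < c j)
    (A B : Set ℝ)
    (hA : A = ⋃ i, Set.Ioo (a i) (b i))
    (hB : B = ⋃ j, Set.Ioo (c j) (d j))
    (hdisj : A ∩ B = ∅)
    (JA JB : Finset ℝ)
    (hJA : JA = Finset.image a Finset.univ ∪ Finset.image b Finset.univ)
    (hJB : JB = Finset.image c Finset.univ ∪ Finset.image d Finset.univ)
    (γhat : ℝ → ℝ) (hγcont : Continuous γhat) :
    Tendsto (fun h : ℝ => (Real.sqrt h)⁻¹ *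
        ∫ t, γhat t * Set.indicator B 1 t *
          (Set.indicator A 1 (t + Real.sqrt h) + Set.indicator A 1 (t - Real.sqrt h)))
      (nhdsWithin 0 (Set.Ioi 0))
      (nhds (∑ t ∈ JA ∩ JB, γhat t)) := by
  subst hA hB hJA hJB
  have hsep : ∀ i j, b i ≤ c j ∨ d j ≤ a i := fun i j =>
    le_or_le_of_disjoint_Ioo (hab i) (hcd j)
      ((disjoint_iff_inter_eq_empty.2 hdisj).mono (subset_iUnion (fun i => Ioo (a i) (b i)) i)
        (subset_iUnion (fun j => Ioo (c j) (d j)) j))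
  rw [sum_inter_endpoints_eq_sum_sum_ite γhat hab hcd hsepA hsepB hsep]
  exact (tendsto_inv_mul_integral_mul_indicator_iUnion_Ioo hγcont hab hcd
    (fun i j h => (hsepA i j h).le) (fun i j h => (hsepB i j h).le) hsep).comp
    Real.tendsto_sqrt_nhdsGT_zero

/-- the one-dimensional localization lemma. For disjoint finite unions of
separated open intervals `A` and `B` with jump sets `J_A`, `J_B`, and any bounded continuous
`γ̂`, the rescaled two-sided overlap integral converges, as `h → 0⁺`, to the sum of `γ̂` over
the common jump points `J_A ∩ J_B`. -/
theorem one_dimensional_localization (n m : ℕ)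
    (a b : Fin n → ℝ) (c d : Fin m → ℝ)
    (hab : ∀ i, a i < b i) (hcd : ∀ j, c j < d j)
    (hsepA : ∀ i j : Fin n, i < j → b i < a j)
    (hsepB : ∀ i j : Fin m, i < j → d i < c j)
    (A B : Set ℝ)
    (hA : A = ⋃ i, Set.Ioo (a i) (b i))
    (hB : B = ⋃ j, Set.Ioo (c j) (d j))
    (hdisj : A ∩ B = ∅)
    (JA JB : Finset ℝ)
    (hJA : JA = Finset.image a Finset.univ ∪ Finset.image b Finset.univ)
    (hJB : JB = Finset.image c Finset.univ ∪ Finset.image d Finset.univ)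
    (γhat : ℝ → ℝ) (hγcont : Continuous γhat) (hγbdd : ∃ M, ∀ t, |γhat t| ≤ M) :
    Tendsto (fun h : ℝ => (Real.sqrt h)⁻¹ *
        ∫ t, γhat t * Set.indicator B 1 t *
          (Set.indicator A 1 (t + Real.sqrt h) + Set.indicator A 1 (t - Real.sqrt h)))
      (nhdsWithin 0 (Set.Ioi 0))
      (nhds (∑ t ∈ JA ∩ JB, γhat t)) :=
  one_dimensional_localization_general n m a b c d hab hcd hsepA hsepB A B hA hB hdisj JA JB hJA hJB
    γhat hγcont
end

section
/- Let φ° be an admissible anisotropy on an open set U ⊆ ℝ^d, let u ∈ C²(U) with ∇u(x) ≠ 0 on U, and set ν := ∇u/|∇u| (a C¹ unit vector field on U). Let ξ_τ be a C¹ vector field on U with ξ_τ(x) · ν(x) = 0 for all x ∈ U. Then at every point x ∈ U, Σ_{i,j=1}^d ∂_{ν_i}φ°(x, ν(x)) ( ∂_{x_j}ν^i(x) − ∂_{x_i}ν^j(x) ) ξ_τ^j(x) = φ°(x, ν(x)) Σ_{j,k=1}^d ν^k(x) ∂_{x_k}ξ_τ^j(x) ν^j(x). -/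
open InnerProductSpace Topology

section Gradient

variable {E : Type*} [NormedAddCommGroup E] [InnerProductSpace ℝ E] [CompleteSpace E]

/-- Over `ℝ` the conjugate-linear Riesz isomorphism is linear, so the chain rule applies to it. -/
noncomputable def toDualSymmCLM : StrongDual ℝ E →L[ℝ] E where
  toFun := (toDual ℝ E).symm
  map_add' := map_add _
  map_smul' _ _ := by simp
  cont := (toDual ℝ E).symm.continuous

theorem hasFDerivAt_gradient {u : E → ℝ} {x : E} (hu : DifferentiableAt ℝ (fderiv ℝ u) x) :
    HasFDerivAt (gradient u) (toDualSymmCLM.comp (fderiv ℝ (fderiv ℝ u) x)) x :=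
  toDualSymmCLM.hasFDerivAt.comp x hu.hasFDerivAt

theorem inner_fderiv_gradient_comm {u : E → ℝ} {x : E} (hu : ContDiffAt ℝ 2 u x) (v w : E) :
    ⟪fderiv ℝ (gradient u) x v, w⟫_ℝ = ⟪fderiv ℝ (gradient u) x w, v⟫_ℝ := by
  have h := hasFDerivAt_gradient ((hu.fderiv_right le_rfl).differentiableAt one_ne_zero)
  simp only [h.fderiv, ContinuousLinearMap.comp_apply, toDualSymmCLM,
    ContinuousLinearMap.coe_mk', LinearMap.coe_mk, AddHom.coe_mk, toDual_symm_apply]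
  exact hu.isSymmSndFDerivAt (by simp) v w

end Gradient

section Normalize

variable {E F : Type*} [NormedAddCommGroup E] [InnerProductSpace ℝ E]
  [NormedAddCommGroup F] [NormedSpace ℝ F]

theorem inner_fderiv_add_inner_fderiv_eq_zero {f g : F → E} {x : F} {c : ℝ}
    (hf : DifferentiableAt ℝ f x) (hg : DifferentiableAt ℝ g x)
    (hc : ∀ᶠ y in 𝓝 x, ⟪f y, g y⟫_ℝ = c) (v : F) :
    ⟪fderiv ℝ f x v, g x⟫_ℝ + ⟪f x, fderiv ℝ g x v⟫_ℝ = 0 := by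
  have h := fderiv_inner_apply ℝ hf hg v
  rw [Filter.EventuallyEq.fderiv_eq (f := fun _ => c) hc, fderiv_const_apply, zero_apply] at h
  linarith

theorem hasFDerivAt_inv_norm_smul {G : F → E} {x : F} (hG : DifferentiableAt ℝ G x)
    (h0 : G x ≠ 0) :
    HasFDerivAt (fun y => ‖G y‖⁻¹ • G y)
      (‖G x‖⁻¹ • fderiv ℝ G x + (fderiv ℝ (fun y => ‖G y‖⁻¹) x).smulRight (G x)) x :=
  ((hG.norm ℝ h0).inv (norm_ne_zero_iff.mpr h0)).hasFDerivAt.smul hG.hasFDerivAt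

omit [NormedSpace ℝ F] in
theorem eventually_inner_inv_norm_smul_self {G : F → E} {x : F} (hG : ContinuousAt G x)
    (h0 : G x ≠ 0) : ∀ᶠ y in 𝓝 x, ⟪‖G y‖⁻¹ • G y, ‖G y‖⁻¹ • G y⟫_ℝ = 1 := by
  filter_upwards [hG.eventually_ne h0] with y hy
  rw [real_inner_self_eq_norm_sq, norm_smul, norm_inv, norm_norm,
    inv_mul_cancel₀ (norm_ne_zero_iff.mpr hy), one_pow]

theorem inner_fderiv_sub_inner_fderiv_of_eq_inv_norm_smul {G ν : E → E} {x : E}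
    (hG : DifferentiableAt ℝ G x) (h0 : G x ≠ 0)
    (hsymm : ∀ v w, ⟪fderiv ℝ G x v, w⟫_ℝ = ⟪fderiv ℝ G x w, v⟫_ℝ)
    (hν : ∀ y, ν y = ‖G y‖⁻¹ • G y) (v w : E) :
    ⟪fderiv ℝ ν x v, w⟫_ℝ - ⟪fderiv ℝ ν x w, v⟫_ℝ
      = ⟪ν x, v⟫_ℝ * ⟪fderiv ℝ ν x (ν x), w⟫_ℝ - ⟪ν x, w⟫_ℝ * ⟪fderiv ℝ ν x (ν x), v⟫_ℝ := by
  have hD : HasFDerivAt ν _ x := funext hν ▸ hasFDerivAt_inv_norm_smul hG h0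
  have hunit := inner_fderiv_add_inner_fderiv_eq_zero hD.differentiableAt hD.differentiableAt
    (by simpa only [hν] using eventually_inner_inv_norm_smul_self hG.continuousAt h0)
  set ρ := fderiv ℝ (fun y => ‖G y‖⁻¹) x
  have hDν : ∀ v w, ⟪fderiv ℝ ν x v, w⟫_ℝ
      = ‖G x‖⁻¹ * ⟪fderiv ℝ G x v, w⟫_ℝ + ρ v * ⟪G x, w⟫_ℝ := by
    intro v w
    simp [hD.fderiv, inner_add_left, real_inner_smul_left]
  have hGG : ⟪G x, G x⟫_ℝ = ‖G x‖ ^ 2 := real_inner_self_eq_norm_sq _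
  have huw := hunit w
  have huv := hunit v
  rw [real_inner_comm _ (ν x), ← two_mul, hDν] at huw huv
  simp only [hDν, hν x, real_inner_smul_left, real_inner_smul_right, map_smul, hGG]
    at huw huv ⊢
  rw [hsymm v w, hsymm (G x) w, hsymm (G x) v]
  field_simp at huw huv ⊢
  linear_combination (⟪G x, w⟫_ℝ * huv - ⟪G x, v⟫_ℝ * huw) / 2

end Normalize

theorem fderiv_apply_self_of_homogeneous {E : Type*} [NormedAddCommGroup E] [NormedSpace ℝ E]
    {f : E → ℝ} {v : E} (hf : DifferentiableAt ℝ f v)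
    (hhom : ∀ t : ℝ, 0 < t → f (t • v) = t * f v) : fderiv ℝ f v v = f v := by
  have hchain : HasDerivAt (fun t : ℝ => f (t • v)) (fderiv ℝ f v v) 1 := by
    have h := hf.hasFDerivAt.comp_hasDerivAt_of_eq (1 : ℝ)
      ((hasDerivAt_id (1 : ℝ)).smul_const v) (one_smul ℝ v).symm
    rwa [one_smul] at h
  have hlinear : HasDerivAt (fun t : ℝ => f (t • v)) (f v) 1 := by
    refine ((hasDerivAt_id (1 : ℝ)).mul_const (f v)).congr_of_eventuallyEq ?_
      |>.congr_deriv (one_mul _)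
    filter_upwards [lt_mem_nhds one_pos] with t ht using hhom t ht
  exact hchain.unique hlinear

namespace IsAdmissibleAnisotropy

variable {d : ℕ} {U : Set (EuclideanSpace ℝ (Fin d))}
  {φ : EuclideanSpace ℝ (Fin d) → EuclideanSpace ℝ (Fin d) → ℝ}

theorem differentiableAt (hφ : IsAdmissibleAnisotropy U φ) (hU : IsOpen U)
    {x ν : EuclideanSpace ℝ (Fin d)} (hx : x ∈ U) (hν : ν ≠ 0) :
    DifferentiableAt ℝ (φ x) ν := by
  have h := hφ.smooth.contDiffAt
    ((hU.prod isOpen_compl_singleton).mem_nhds (Set.mk_mem_prod hx hν))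
  exact (h.comp ν (contDiffAt_const.prodMk contDiffAt_id)).differentiableAt two_ne_zero

theorem inner_gradient_self (hφ : IsAdmissibleAnisotropy U φ) (hU : IsOpen U)
    {x ν : EuclideanSpace ℝ (Fin d)} (hx : x ∈ U) (hν : ν ≠ 0) :
    ⟪gradient (φ x) ν, ν⟫_ℝ = φ x ν := by
  rw [gradient, toDual_symm_apply]
  exact fderiv_apply_self_of_homogeneous (hφ.differentiableAt hU hx hν)
    fun t ht => by rw [hφ.homogeneous x hx, abs_of_pos ht]

end IsAdmissibleAnisotropy

namespace EuclideanSpace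

variable {ι : Type*} [Fintype ι] [DecidableEq ι]

theorem inner_apply_eq_sum_sum (L : EuclideanSpace ℝ ι →L[ℝ] EuclideanSpace ℝ ι)
    (a b : EuclideanSpace ℝ ι) :
    ⟪L b, a⟫_ℝ = ∑ i, ∑ j, a i * L (single j 1) i * b j := by
  conv_lhs => rw [← (basisFun ι ℝ).sum_repr b]
  simp only [basisFun_repr, basisFun_apply, map_sum, map_smul, PiLp.inner_apply,
    WithLp.ofLp_sum, WithLp.ofLp_smul, Finset.sum_apply, Pi.smul_apply, smul_eq_mul,
    RCLike.inner_apply, Real.ringHom_apply, Finset.mul_sum]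
  exact Finset.sum_congr rfl fun _ _ => Finset.sum_congr rfl fun _ _ => by ring

theorem inner_apply_sub_inner_apply_eq_sum_sum
    (L : EuclideanSpace ℝ ι →L[ℝ] EuclideanSpace ℝ ι) (a b : EuclideanSpace ℝ ι) :
    ⟪L b, a⟫_ℝ - ⟪L a, b⟫_ℝ = ∑ i, ∑ j, a i * (L (single j 1) i - L (single i 1) j) * b j := by
  rw [inner_apply_eq_sum_sum, inner_apply_eq_sum_sum L b,
    Finset.sum_comm (f := fun i j => b i * _ * a j),
    ← Finset.sum_sub_distrib]
  refine Finset.sum_congr rfl fun _ _ => ?_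
  rw [← Finset.sum_sub_distrib]
  exact Finset.sum_congr rfl fun _ _ => by ring

end EuclideanSpace

/-- the antisymmetric-part identity \eqref{antisymmetric term}:
for `ν = ∇u/|∇u|` and a tangential `C¹` field `ξτ`,
`Σ_{i,j} ∂_{ν_i}φ°(x,ν) (∂_{x_j}ν^i - ∂_{x_i}ν^j) ξτ^j = φ°(x,ν) Σ_{j,k} ν^k ∂_{x_k}ξτ^j ν^j`. -/
theorem antisymmetric_part_identity {d : ℕ}
    (U : Set (EuclideanSpace ℝ (Fin d))) (hU : IsOpen U)
    (φd : EuclideanSpace ℝ (Fin d) → EuclideanSpace ℝ (Fin d) → ℝ)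
    (hφd : IsAdmissibleAnisotropy U φd)
    (u : EuclideanSpace ℝ (Fin d) → ℝ) (hu : ContDiffOn ℝ 2 u U)
    (hgrad : ∀ x ∈ U, gradient u x ≠ 0)
    (ν : EuclideanSpace ℝ (Fin d) → EuclideanSpace ℝ (Fin d))
    (hν : ∀ x, ν x = ‖gradient u x‖⁻¹ • gradient u x)
    (ξτ : EuclideanSpace ℝ (Fin d) → EuclideanSpace ℝ (Fin d))
    (hξτ : ContDiffOn ℝ 1 ξτ U)
    (horth : ∀ x ∈ U, (inner ℝ (ξτ x) (ν x) : ℝ) = 0)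
    (x : EuclideanSpace ℝ (Fin d)) (hx : x ∈ U) :
    ∑ i : Fin d, ∑ j : Fin d, gradient (φd x) (ν x) i *
        (fderiv ℝ ν x (EuclideanSpace.single j 1) i
          - fderiv ℝ ν x (EuclideanSpace.single i 1) j) * ξτ x j
      = φd x (ν x) *
          ∑ j : Fin d, ∑ k : Fin d,
            ν x k * fderiv ℝ ξτ x (EuclideanSpace.single k 1) j * ν x j := by
  have hUx : U ∈ 𝓝 x := hU.mem_nhds hx
  have hu2 : ContDiffAt ℝ 2 u x := hu.contDiffAt hUx
  have hG : DifferentiableAt ℝ (gradient u) x :=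
    (hasFDerivAt_gradient ((hu2.fderiv_right le_rfl).differentiableAt one_ne_zero)).differentiableAt
  have hνx : DifferentiableAt ℝ ν x :=
    (funext hν ▸ hasFDerivAt_inv_norm_smul hG (hgrad x hx)).differentiableAt
  have hν0 : ν x ≠ 0 := by
    rw [hν]
    exact smul_ne_zero (inv_ne_zero (norm_ne_zero_iff.mpr (hgrad x hx))) (hgrad x hx)
  have hcurl := inner_fderiv_sub_inner_fderiv_of_eq_inv_norm_smul hG (hgrad x hx)
    (inner_fderiv_gradient_comm hu2) hν (ξτ x) (gradient (φd x) (ν x))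
  have hEuler := hφd.inner_gradient_self hU hx hν0
  have htangent := inner_fderiv_add_inner_fderiv_eq_zero
    ((hξτ.contDiffAt hUx).differentiableAt one_ne_zero) hνx
    (Filter.eventually_of_mem hUx horth) (ν x)
  have hRHS : ∑ j, ∑ k, ν x k * fderiv ℝ ξτ x (EuclideanSpace.single k 1) j * ν x j
      = ⟪fderiv ℝ ξτ x (ν x), ν x⟫_ℝ := by
    rw [EuclideanSpace.inner_apply_eq_sum_sum]
    exact Finset.sum_congr rfl fun _ _ => Finset.sum_congr rfl fun _ _ => by ring
  rw [← EuclideanSpace.inner_apply_sub_inner_apply_eq_sum_sum, hRHS, hcurl,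
    real_inner_comm (ξτ x), horth x hx, real_inner_comm _ (ν x), hEuler,
    real_inner_comm (ξτ x) (fderiv ℝ ν x (ν x))]
  linear_combination -φd x (ν x) * htangent
end
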